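/- Let a > −1 and γ > 0, let k_{a,γ}(t) := e^{−te} · ∫_0^∞ t^{a+b} b^{γ−1} / ( Γ(γ) Γ(a+b+1) ) db for t > 0, and set Φ_{a,γ}(t) := ∫_0^t k_{a,γ}(s) ds. Then Φ_{a,γ} is doubling: sup_{t>0} Φ_{a,γ}(2t) / Φ_{a,γ}(t) < ∞. -/

import Mathlib

open MeasureTheory Set

/-- The kernel `k_{a,γ}(t) := e^{-te} ∫_0^∞ t^{a+b} b^{γ-1} / (Γ(γ)Γ(a+b+1)) db`. -/
noncomputable def kKer (a γ : ℝ) (t : ℝ) : ℝ :=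
  Real.exp (-(t * Real.exp 1)) *
    ∫ b in Set.Ioi (0:ℝ), t ^ (a + b) * b ^ (γ - 1) / (Real.Gamma γ * Real.Gamma (a + b + 1))

/-- `Φ_{a,γ}(t) := ∫_0^t k_{a,γ}(s) ds`. -/
noncomputable def PhiKer (a γ : ℝ) (t : ℝ) : ℝ := ∫ s in (0:ℝ)..t, kKer a γ s

variable {a γ : ℝ}

noncomputable def fK (a γ t b : ℝ) : ℝ :=
  t ^ (a + b) * b ^ (γ - 1) / (Real.Gamma γ * Real.Gamma (a + b + 1))

noncomputable def gG (γ b : ℝ) : ℝ := b ^ (γ - 1) * Real.exp (-(Real.log (3/2)) * b)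

lemma gG_nonneg (γ : ℝ) {b : ℝ} (hb : 0 ≤ b) : 0 ≤ gG γ b := by
  unfold gG
  positivity

lemma gG_integrable (γ : ℝ) (hγ : 0 < γ) : IntegrableOn (gG γ) (Ioi 0) := by
  have h := integrableOn_rpow_mul_exp_neg_mul_rpow (p := 1) (s := γ - 1)
    (b := Real.log (3/2)) (by linarith) one_pos (Real.log_pos (by norm_num))
  unfold gG
  simpa [neg_mul] using h

/-- Lower bound for Gamma. -/
lemma Gamma_lb {x M : ℝ} (hx : 1 ≤ x) (hM : 1 ≤ M) :
    M ^ x * Real.exp (-(3/2 * M)) / 2 ≤ Real.Gamma x := by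
  have hx0 : (0:ℝ) < x := by linarith
  have hM0 : (0:ℝ) < M := by linarith
  rw [Real.Gamma_eq_integral hx0]
  have hint := Real.GammaIntegral_convergent hx0
  have hsub : Ioc M (3/2 * M) ⊆ Ioi (0:ℝ) := fun u hu => lt_trans hM0 hu.1
  have hnn : 0 ≤ᵐ[volume.restrict (Ioi (0:ℝ))]
      fun u : ℝ => Real.exp (-u) * u ^ (x - 1) := by
    filter_upwards [ae_restrict_mem measurableSet_Ioi] with u hu
    exact mul_nonneg (Real.exp_pos _).le (Real.rpow_nonneg (le_of_lt hu) _)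
  have step1 : ∫ u in Ioc M (3/2 * M), Real.exp (-u) * u ^ (x - 1)
      ≤ ∫ u in Ioi 0, Real.exp (-u) * u ^ (x - 1) :=
    setIntegral_mono_set hint hnn (HasSubset.Subset.eventuallyLE hsub)
  refine le_trans ?_ step1
  have hconst : Real.exp (-(3/2 * M)) * M ^ (x-1) * (volume (Ioc M (3/2*M))).toReal
      ≤ ∫ u in Ioc M (3/2 * M), Real.exp (-u) * u ^ (x - 1) := by
    apply setIntegral_ge_of_const_le_real measurableSet_Ioc (by simp)
    · intro u hu
      have h1 : Real.exp (-(3/2*M)) ≤ Real.exp (-u) := by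
        apply Real.exp_le_exp.mpr; linarith [hu.2]
      have h2 : M ^ (x-1) ≤ u ^ (x-1) :=
        Real.rpow_le_rpow hM0.le hu.1.le (by linarith)
      have := mul_le_mul h1 h2 (Real.rpow_nonneg hM0.le _) (Real.exp_pos _).le
      exact this
    · exact hint.mono_set (hsub.trans (by simp))
  refine le_trans ?_ hconst
  rw [Real.volume_Ioc]
  have : (3/2 * M - M) = M / 2 := by ring
  rw [this, ENNReal.toReal_ofReal (by positivity)]
  have hMx : M ^ x = M ^ (x - 1) * M := by
    rw [← Real.rpow_add_one hM0.ne' (x-1)]; ring_nf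
  rw [hMx]; ring_nf; nlinarith [Real.exp_pos (-(3/2*M)), Real.rpow_nonneg hM0.le (x-1),
    Real.exp_pos (-(M*(3/2)))]

lemma Gamma_min (ha : -1 < a) : ∃ m > 0, ∀ x ∈ Icc (a+1) (a+2), m ≤ Real.Gamma x := by
  have hne : (Icc (a+1) (a+2)).Nonempty := nonempty_Icc.mpr (by linarith)
  have hcont : ContinuousOn Real.Gamma (Icc (a+1) (a+2)) := by
    intro x hx
    have hx0 : 0 < x := by have := hx.1; linarith
    refine (Real.differentiableAt_Gamma fun m => ?_).continuousAt.continuousWithinAt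
    have : (0:ℝ) ≤ m := Nat.cast_nonneg m
    intro h; rw [h] at hx0; linarith
  obtain ⟨x₀, hx₀, hmin⟩ := isCompact_Icc.exists_isMinOn hne hcont
  have hx₀0 : 0 < x₀ := by have := hx₀.1; linarith
  exact ⟨Real.Gamma x₀, Real.Gamma_pos_of_pos hx₀0, fun x hx => hmin hx⟩

lemma fK_pos (ha : -1 < a) (hγ : 0 < γ) {t b : ℝ} (ht : 0 < t) (hb : 0 < b) : 0 < fK a γ t b := by
  unfold fK
  have h1 : 0 < Real.Gamma γ := Real.Gamma_pos_of_pos hγ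
  have h2 : 0 < Real.Gamma (a + b + 1) := Real.Gamma_pos_of_pos (by linarith)
  positivity

lemma fK_nonneg (ha : -1 < a) (hγ : 0 < γ) {t b : ℝ} (ht : 0 ≤ t) (hb : 0 ≤ b) : 0 ≤ fK a γ t b := by
  unfold fK
  have h1 : 0 < Real.Gamma γ := Real.Gamma_pos_of_pos hγ
  have h2 : 0 < Real.Gamma (a + b + 1) := Real.Gamma_pos_of_pos (by linarith)
  positivity



lemma gG_eq {b : ℝ} : gG γ b = b ^ (γ - 1) * (2/3:ℝ) ^ b := by
  unfold gG
  congr 1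
  rw [Real.rpow_def_of_pos (by norm_num : (0:ℝ) < 2/3)]
  congr 1
  rw [show (2/3:ℝ) = (3/2:ℝ)⁻¹ by norm_num, Real.log_inv]

set_option maxHeartbeats 1000000 in
lemma fK_le (ha : -1 < a) (hγ : 0 < γ) :
    ∃ K, 0 ≤ K ∧ ∀ t, 0 < t → ∀ b ∈ Ioi (0:ℝ),
      fK a γ t b ≤ K * (t ^ a + t ^ (a+1) + Real.exp (9/4 * t)) * gG γ b := by
  obtain ⟨m, hm0, hm⟩ := Gamma_min ha
  have hΓγ : 0 < Real.Gamma γ := Real.Gamma_pos_of_pos hγ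
  set K1 : ℝ := (3/2) / (Real.Gamma γ * m) with hK1def
  set K2 : ℝ := 2 * Real.exp (3/2) / Real.Gamma γ with hK2def
  set K3 : ℝ := 2 * (2/3:ℝ) ^ a / Real.Gamma γ with hK3def
  have hK1 : 0 ≤ K1 := by positivity
  have hK2 : 0 ≤ K2 := by positivity
  have hK3 : 0 ≤ K3 := by
    have : (0:ℝ) < (2/3:ℝ) ^ a := Real.rpow_pos_of_pos (by norm_num) a
    positivity
  refine ⟨K1 + K2 + K3, by linarith, fun t ht b hb => ?_⟩
  have hb0 : (0:ℝ) < b := hb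
  have ht' : (0:ℝ) ≤ t := ht.le
  have hgb : 0 ≤ gG γ b := gG_nonneg γ hb0.le
  have hta : 0 ≤ t ^ a := Real.rpow_nonneg ht' a
  have hta1 : 0 ≤ t ^ (a+1) := Real.rpow_nonneg ht' _
  have hexp : 0 ≤ Real.exp (9/4*t) := (Real.exp_pos _).le
  have hbγ : 0 ≤ b ^ (γ-1) := Real.rpow_nonneg hb0.le _
  have hΓx : 0 < Real.Gamma (a+b+1) := Real.Gamma_pos_of_pos (by linarith)
  rcases le_or_gt b 1 with hb1 | hb1
  · -- b ≤ 1 : head case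
    have hmx : m ≤ Real.Gamma (a+b+1) := hm _ ⟨by linarith, by linarith⟩
    have h1 : t ^ (a+b) ≤ t^a + t^(a+1) := by
      rcases le_or_gt t 1 with h | h
      · have := Real.rpow_le_rpow_of_exponent_ge ht h (by linarith : a ≤ a + b)
        linarith
      · have := Real.rpow_le_rpow_of_exponent_le h.le (by linarith : a + b ≤ a + 1)
        linarith
    have h2 : b ^ (γ-1) ≤ 3/2 * gG γ b := by
      rw [gG_eq]
      have he : (2/3:ℝ) ≤ (2/3:ℝ) ^ b := by
        calc (2/3:ℝ) = (2/3:ℝ)^(1:ℝ) := (Real.rpow_one _).symm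
          _ ≤ (2/3:ℝ)^b := Real.rpow_le_rpow_of_exponent_ge (by norm_num) (by norm_num) hb1
      nlinarith
    have hnum : t^(a+b) * b^(γ-1) ≤ (t^a + t^(a+1)) * (3/2 * gG γ b) :=
      mul_le_mul h1 h2 hbγ (by linarith)
    calc fK a γ t b = t^(a+b) * b^(γ-1) / (Real.Gamma γ * Real.Gamma (a+b+1)) := rfl
      _ ≤ ((t^a + t^(a+1)) * (3/2 * gG γ b)) / (Real.Gamma γ * m) := by
          apply div_le_div₀ (by positivity) hnum (by positivity)
          exact mul_le_mul_of_nonneg_left hmx hΓγ.le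
      _ = K1 * (t^a + t^(a+1)) * gG γ b := by
          rw [hK1def]; field_simp
      _ ≤ (K1 + K2 + K3) * (t^a + t^(a+1) + Real.exp (9/4*t)) * gG γ b := by
          have : K1 * (t^a + t^(a+1)) ≤ (K1+K2+K3) * (t^a + t^(a+1) + Real.exp (9/4*t)) := by
            nlinarith
          exact mul_le_mul_of_nonneg_right this hgb
  · -- b > 1 : tail cases
    have hx1 : 1 ≤ a + b + 1 := by linarith
    rcases le_or_gt t (2/3) with htc | htc
    · -- small t, M = 1
      have hΓ := Gamma_lb hx1 (le_refl 1)
      rw [Real.one_rpow] at hΓ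
      have htb : t ^ b ≤ (2/3:ℝ)^b :=
        Real.rpow_le_rpow ht' htc (by linarith)
      have hnum : t^(a+b) * b^(γ-1) ≤ t^a * ((2/3:ℝ)^b * b^(γ-1)) := by
        rw [Real.rpow_add ht]
        calc t^a * t^b * b^(γ-1) ≤ t^a * (2/3:ℝ)^b * b^(γ-1) := by
              apply mul_le_mul_of_nonneg_right (mul_le_mul_of_nonneg_left htb hta) hbγ
          _ = t^a * ((2/3:ℝ)^b * b^(γ-1)) := by ring
      calc fK a γ t b = t^(a+b) * b^(γ-1) / (Real.Gamma γ * Real.Gamma (a+b+1)) := rfl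
        _ ≤ (t^a * ((2/3:ℝ)^b * b^(γ-1))) / (Real.Gamma γ * (1 * Real.exp (-(3/2*1)) / 2)) := by
            apply div_le_div₀ (by positivity) hnum (by positivity)
            exact mul_le_mul_of_nonneg_left hΓ hΓγ.le
        _ = K2 * t^a * gG γ b := by
            rw [hK2def, gG_eq, Real.exp_neg]
            field_simp [(Real.exp_pos (3/2:ℝ)).ne']
        _ ≤ (K1 + K2 + K3) * (t^a + t^(a+1) + Real.exp (9/4*t)) * gG γ b := by
            have : K2 * t^a ≤ (K1+K2+K3) * (t^a + t^(a+1) + Real.exp (9/4*t)) := by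
              nlinarith
            exact mul_le_mul_of_nonneg_right this hgb
    · -- large t, M = 3/2 t
      set M : ℝ := 3/2 * t with hMdef
      have hM1 : 1 ≤ M := by rw [hMdef]; linarith
      have hM0 : 0 < M := by linarith
      have hΓ := Gamma_lb hx1 hM1
      have h32M : 3/2 * M = 9/4 * t := by rw [hMdef]; ring
      rw [h32M] at hΓ
      have htM : t = (2/3) * M := by rw [hMdef]; ring
      have ht23 : t ^ (a+b) = (2/3:ℝ)^(a+b) * M^(a+b) := by
        rw [htM, Real.mul_rpow (by norm_num) hM0.le]
      have hMab : M^(a+b+1) = M^(a+b) * M := Real.rpow_add_one hM0.ne' _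
      have hMabpos : 0 < M^(a+b) := Real.rpow_pos_of_pos hM0 _
      have h23ab : (2/3:ℝ)^(a+b) = (2/3:ℝ)^a * (2/3:ℝ)^b := Real.rpow_add (by norm_num) _ _
      have h23a : 0 < (2/3:ℝ)^a := Real.rpow_pos_of_pos (by norm_num) a
      have h23b : 0 < (2/3:ℝ)^b := Real.rpow_pos_of_pos (by norm_num) b
      calc fK a γ t b = t^(a+b) * b^(γ-1) / (Real.Gamma γ * Real.Gamma (a+b+1)) := rfl
        _ ≤ t^(a+b) * b^(γ-1) / (Real.Gamma γ * (M^(a+b+1) * Real.exp (-(9/4*t)) / 2)) := by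
            apply div_le_div₀ (by positivity) le_rfl (by positivity)
            exact mul_le_mul_of_nonneg_left hΓ hΓγ.le
        _ = (2/3:ℝ)^a * ((2/3:ℝ)^b * b^(γ-1)) * (2 * Real.exp (9/4*t)) / (Real.Gamma γ * M) := by
            rw [ht23, hMab, h23ab, Real.exp_neg]
            field_simp
        _ ≤ (2/3:ℝ)^a * ((2/3:ℝ)^b * b^(γ-1)) * (2 * Real.exp (9/4*t)) / (Real.Gamma γ * 1) := by
            apply div_le_div₀ (by positivity) le_rfl (by positivity)
            exact mul_le_mul_of_nonneg_left hM1 hΓγ.le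
        _ = K3 * Real.exp (9/4*t) * gG γ b := by
            rw [hK3def, gG_eq]
            field_simp
        _ ≤ (K1 + K2 + K3) * (t^a + t^(a+1) + Real.exp (9/4*t)) * gG γ b := by
            have : K3 * Real.exp (9/4*t) ≤ (K1+K2+K3) * (t^a + t^(a+1) + Real.exp (9/4*t)) := by
              nlinarith
            exact mul_le_mul_of_nonneg_right this hgb

/-- modified g, measurable on all of ℝ -/
noncomputable def gH (a γ : ℝ) : ℝ → ℝ :=
  (Ioi 0).piecewise (fun b => b ^ (γ - 1) / (Real.Gamma γ * Real.Gamma (a + b + 1))) 0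

lemma GammaAffine_contOn (ha : -1 < a) :
    ContinuousOn (fun b : ℝ => Real.Gamma (a + b + 1)) (Ioi 0) := by
  intro b hb
  have hb0 : (0:ℝ) < b := hb
  have hcg : ContinuousAt Real.Gamma (a + b + 1) := by
    refine (Real.differentiableAt_Gamma fun m => ?_).continuousAt
    have hm : (0:ℝ) ≤ m := Nat.cast_nonneg m
    intro h
    have : (0:ℝ) < a + b + 1 := by linarith
    rw [h] at this; linarith
  have hca : Continuous (fun b : ℝ => a + b + 1) := by continuity
  have : ContinuousAt (fun x : ℝ => Real.Gamma (a + x + 1)) b :=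
    ContinuousAt.comp (f := fun x : ℝ => a + x + 1) hcg hca.continuousAt
  exact this.continuousWithinAt

lemma gH_contOn (ha : -1 < a) (hγ : 0 < γ) :
    ContinuousOn (fun b : ℝ => b ^ (γ - 1) / (Real.Gamma γ * Real.Gamma (a + b + 1))) (Ioi 0) := by
  apply ContinuousOn.div
  · exact continuousOn_id.rpow_const fun b hb => Or.inl (ne_of_gt hb)
  · exact continuousOn_const.mul (GammaAffine_contOn ha)
  · intro b hb
    have hb0 : (0:ℝ) < b := hb
    have h1 : 0 < Real.Gamma (a + b + 1) := Real.Gamma_pos_of_pos (by linarith)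
    have h2 : 0 < Real.Gamma γ := Real.Gamma_pos_of_pos hγ
    positivity

lemma gH_meas (ha : -1 < a) (hγ : 0 < γ) : Measurable (gH a γ) :=
  ContinuousOn.measurable_piecewise (gH_contOn ha hγ) continuousOn_const measurableSet_Ioi

lemma fK_eq_gH {t b : ℝ} (hb : b ∈ Ioi (0:ℝ)) : fK a γ t b = t ^ (a + b) * gH a γ b := by
  unfold fK gH
  rw [Set.piecewise_eq_of_mem _ _ _ hb, mul_div_assoc]

noncomputable def FInt (a γ t : ℝ) : ℝ := ∫ b in Ioi (0:ℝ), fK a γ t b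

lemma FInt_sm (ha : -1 < a) (hγ : 0 < γ) : StronglyMeasurable (FInt a γ) := by
  have hj : Measurable (fun p : ℝ × ℝ => p.1 ^ (a + p.2) * gH a γ p.2) :=
    (measurable_fst.pow (measurable_const.add measurable_snd)).mul
      ((gH_meas ha hγ).comp measurable_snd)
  have h := hj.stronglyMeasurable.integral_prod_right'
      (ν := volume.restrict (Ioi (0:ℝ)))
  have : FInt a γ = fun t => ∫ b in Ioi (0:ℝ), t ^ (a + b) * gH a γ b := by
    funext t
    exact setIntegral_congr_fun measurableSet_Ioi fun b hb => fK_eq_gH hb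
  rw [this]
  exact h

lemma fK_contOn (ha : -1 < a) (hγ : 0 < γ) {t : ℝ} (ht : 0 < t) :
    ContinuousOn (fK a γ t) (Ioi 0) := by
  unfold fK
  apply ContinuousOn.div
  · apply ContinuousOn.mul
    · exact (continuous_const.rpow (continuous_const.add continuous_id)
        (fun b => Or.inl ht.ne')).continuousOn
    · exact continuousOn_id.rpow_const fun b hb => Or.inl (ne_of_gt hb)
  · exact continuousOn_const.mul (GammaAffine_contOn ha)
  · intro b hb
    have hb0 : (0:ℝ) < b := hb
    have h1 : 0 < Real.Gamma (a + b + 1) := Real.Gamma_pos_of_pos (by linarith)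
    have h2 : 0 < Real.Gamma γ := Real.Gamma_pos_of_pos hγ
    positivity

lemma fK_integrableOn (ha : -1 < a) (hγ : 0 < γ) {t : ℝ} (ht : 0 < t) :
    IntegrableOn (fK a γ t) (Ioi 0) := by
  obtain ⟨K, hK0, hK⟩ := fK_le ha hγ
  have hbd := (gG_integrable γ hγ).const_mul (K * (t ^ a + t ^ (a+1) + Real.exp (9/4 * t)))
  refine Integrable.mono' hbd ((fK_contOn ha hγ ht).aestronglyMeasurable measurableSet_Ioi) ?_
  filter_upwards [ae_restrict_mem measurableSet_Ioi] with b hb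
  rw [Real.norm_of_nonneg (fK_nonneg ha hγ ht.le (le_of_lt hb))]
  exact hK t ht b hb

lemma kKer_eq (t : ℝ) : kKer a γ t = Real.exp (-(t * Real.exp 1)) * FInt a γ t := rfl

lemma FInt_nonneg (ha : -1 < a) (hγ : 0 < γ) {t : ℝ} (ht : 0 ≤ t) : 0 ≤ FInt a γ t :=
  setIntegral_nonneg measurableSet_Ioi fun b hb => fK_nonneg ha hγ ht (le_of_lt hb)

lemma kKer_nonneg (ha : -1 < a) (hγ : 0 < γ) {t : ℝ} (ht : 0 ≤ t) : 0 ≤ kKer a γ t := by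
  rw [kKer_eq]
  exact mul_nonneg (Real.exp_pos _).le (FInt_nonneg ha hγ ht)

lemma FInt_le (ha : -1 < a) (hγ : 0 < γ) :
    ∃ K, 0 ≤ K ∧ ∀ t, 0 < t →
      FInt a γ t ≤ K * (t ^ a + t ^ (a+1) + Real.exp (9/4 * t)) := by
  obtain ⟨K, hK0, hK⟩ := fK_le ha hγ
  set IG : ℝ := ∫ b in Ioi (0:ℝ), gG γ b with hIG
  have hIG0 : 0 ≤ IG := setIntegral_nonneg measurableSet_Ioi fun b hb => gG_nonneg γ (le_of_lt hb)
  refine ⟨K * IG, by positivity, fun t ht => ?_⟩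
  have hc : 0 ≤ t ^ a + t ^ (a+1) + Real.exp (9/4 * t) := by
    have h1 : 0 ≤ t ^ a := Real.rpow_nonneg ht.le a
    have h2 : 0 ≤ t ^ (a+1) := Real.rpow_nonneg ht.le _
    positivity
  have hmono : FInt a γ t ≤ ∫ b in Ioi (0:ℝ),
      K * (t ^ a + t ^ (a+1) + Real.exp (9/4 * t)) * gG γ b := by
    apply setIntegral_mono_on (fK_integrableOn ha hγ ht)
      ((gG_integrable γ hγ).const_mul _) measurableSet_Ioi
    intro b hb
    exact hK t ht b hb
  calc FInt a γ t ≤ _ := hmono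
    _ = K * (t ^ a + t ^ (a+1) + Real.exp (9/4 * t)) * IG := by
        rw [integral_const_mul]
    _ ≤ K * IG * (t ^ a + t ^ (a+1) + Real.exp (9/4 * t)) := by ring_nf; exact le_rfl

noncomputable def DKer (a : ℝ) (t : ℝ) : ℝ :=
  t ^ a * Real.exp (-t) + t ^ (a+1) * Real.exp (-t) + Real.exp (-(2/5) * t)

lemma DKer_integrableOn (ha : -1 < a) : IntegrableOn (DKer a) (Ioi 0) := by
  have h1 := integrableOn_rpow_mul_exp_neg_mul_rpow (p := 1) (s := a) (b := 1) ha one_pos one_pos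
  have h2 := integrableOn_rpow_mul_exp_neg_mul_rpow (p := 1) (s := a+1) (b := 1)
    (by linarith) one_pos one_pos
  have h3 := exp_neg_integrableOn_Ioi 0 (by norm_num : (0:ℝ) < 2/5)
  simp only [Real.rpow_one, neg_one_mul, one_mul] at h1 h2
  exact (h1.add h2).add h3

lemma kKer_integrableOn (ha : -1 < a) (hγ : 0 < γ) : IntegrableOn (kKer a γ) (Ioi 0) := by
  obtain ⟨K, hK0, hK⟩ := FInt_le ha hγ
  have he1 : (1:ℝ) ≤ Real.exp 1 := by
    have := Real.exp_one_gt_d9; linarith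
  have he2 : (2.65:ℝ) ≤ Real.exp 1 := by
    have := Real.exp_one_gt_d9; linarith
  have hbd := (DKer_integrableOn ha).const_mul K
  have hsm : AEStronglyMeasurable (kKer a γ) (volume.restrict (Ioi 0)) := by
    have : StronglyMeasurable (kKer a γ) := by
      have h1 : Continuous fun t : ℝ => Real.exp (-(t * Real.exp 1)) := by continuity
      exact h1.stronglyMeasurable.mul (FInt_sm ha hγ)
    exact this.aestronglyMeasurable
  refine Integrable.mono' hbd hsm ?_
  filter_upwards [ae_restrict_mem measurableSet_Ioi] with t ht
  have ht0 : (0:ℝ) < t := ht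
  rw [Real.norm_of_nonneg (kKer_nonneg ha hγ ht0.le), kKer_eq]
  have hFle := hK t ht0
  have hE : (0:ℝ) < Real.exp (-(t * Real.exp 1)) := Real.exp_pos _
  have step1 : Real.exp (-(t * Real.exp 1)) * FInt a γ t ≤
      Real.exp (-(t * Real.exp 1)) * (K * (t ^ a + t ^ (a+1) + Real.exp (9/4 * t))) :=
    mul_le_mul_of_nonneg_left hFle hE.le
  refine le_trans step1 ?_
  have hta : 0 ≤ t ^ a := Real.rpow_nonneg ht0.le a
  have hta1 : 0 ≤ t ^ (a+1) := Real.rpow_nonneg ht0.le _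
  have hee : Real.exp (-(t * Real.exp 1)) ≤ Real.exp (-t) := by
    apply Real.exp_le_exp.mpr; nlinarith
  have hee2 : Real.exp (9/4 * t) * Real.exp (-(t * Real.exp 1)) ≤ Real.exp (-(2/5) * t) := by
    rw [← Real.exp_add]
    apply Real.exp_le_exp.mpr; nlinarith
  have expand : Real.exp (-(t * Real.exp 1)) * (K * (t ^ a + t ^ (a+1) + Real.exp (9/4 * t)))
      = K * (t ^ a * Real.exp (-(t * Real.exp 1)) + t ^ (a+1) * Real.exp (-(t * Real.exp 1))
        + Real.exp (9/4 * t) * Real.exp (-(t * Real.exp 1))) := by ring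
  rw [expand]
  unfold DKer
  have b1 : t ^ a * Real.exp (-(t * Real.exp 1)) ≤ t ^ a * Real.exp (-t) :=
    mul_le_mul_of_nonneg_left hee hta
  have b2 : t ^ (a+1) * Real.exp (-(t * Real.exp 1)) ≤ t ^ (a+1) * Real.exp (-t) :=
    mul_le_mul_of_nonneg_left hee hta1
  nlinarith

lemma FInt_pos (ha : -1 < a) (hγ : 0 < γ) {t : ℝ} (ht : 0 < t) : 0 < FInt a γ t := by
  unfold FInt
  have hnn : 0 ≤ᵐ[volume.restrict (Ioi (0:ℝ))] fK a γ t := by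
    filter_upwards [ae_restrict_mem measurableSet_Ioi] with b hb
    exact fK_nonneg ha hγ ht.le (le_of_lt hb)
  rw [setIntegral_pos_iff_support_of_nonneg_ae hnn (fK_integrableOn ha hγ ht)]
  have hsub : Ioi (0:ℝ) ⊆ Function.support (fK a γ t) ∩ Ioi 0 := by
    intro b hb
    exact ⟨ne_of_gt (fK_pos ha hγ ht hb), hb⟩
  calc (0:ENNReal) < volume (Ioi (0:ℝ)) := by simp
    _ ≤ volume (Function.support (fK a γ t) ∩ Ioi 0) := measure_mono hsub

lemma kKer_pos (ha : -1 < a) (hγ : 0 < γ) {t : ℝ} (ht : 0 < t) : 0 < kKer a γ t := by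
  rw [kKer_eq]
  exact mul_pos (Real.exp_pos _) (FInt_pos ha hγ ht)

/-- decomposition of `FInt` into head and tail. -/
lemma FInt_decomp (ha : -1 < a) (hγ : 0 < γ) {t : ℝ} (ht : 0 < t) :
    FInt a γ t = (∫ b in Ioc (0:ℝ) 1, fK a γ t b) + ∫ b in Ioi (1:ℝ), fK a γ t b := by
  unfold FInt
  rw [← Ioc_union_Ioi_eq_Ioi (zero_le_one (α := ℝ)),
    setIntegral_union (Ioc_disjoint_Ioi le_rfl) measurableSet_Ioi
      ((fK_integrableOn ha hγ ht).mono_set Ioc_subset_Ioi_self)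
      ((fK_integrableOn ha hγ ht).mono_set (Ioi_subset_Ioi zero_le_one))]

lemma doubling_pointwise (ha : -1 < a) (hγ : 0 < γ) :
    ∃ C1, 0 ≤ C1 ∧ ∀ s ∈ Ioc (0:ℝ) (1/2), kKer a γ (2*s) ≤ C1 * kKer a γ s := by
  classical
  set CH : ℝ := ∫ b in Ioc (0:ℝ) 1, fK a γ 1 b with hCHdef
  set CT : ℝ := ∫ b in Ioi (1:ℝ), fK a γ 1 b with hCTdef
  have hIH : IntegrableOn (fK a γ 1) (Ioc (0:ℝ) 1) :=
    (fK_integrableOn ha hγ one_pos).mono_set Ioc_subset_Ioi_self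
  have hIT : IntegrableOn (fK a γ 1) (Ioi (1:ℝ)) :=
    (fK_integrableOn ha hγ one_pos).mono_set (Ioi_subset_Ioi zero_le_one)
  have hCH : 0 < CH := by
    rw [hCHdef]
    have hnn : 0 ≤ᵐ[volume.restrict (Ioc (0:ℝ) 1)] fK a γ 1 := by
      filter_upwards [ae_restrict_mem measurableSet_Ioc] with b hb
      exact fK_nonneg ha hγ zero_le_one hb.1.le
    rw [setIntegral_pos_iff_support_of_nonneg_ae hnn hIH]
    have hsub : Ioc (0:ℝ) 1 ⊆ Function.support (fK a γ 1) ∩ Ioc 0 1 := fun b hb =>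
      ⟨ne_of_gt (fK_pos ha hγ one_pos hb.1), hb⟩
    calc (0:ENNReal) < volume (Ioc (0:ℝ) 1) := by simp
      _ ≤ _ := measure_mono hsub
  have hCT : 0 ≤ CT :=
    setIntegral_nonneg measurableSet_Ioi fun b hb =>
      fK_nonneg ha hγ zero_le_one (by linarith [mem_Ioi.mp hb])
  have h2a1 : (0:ℝ) < (2:ℝ) ^ (a+1) := Real.rpow_pos_of_pos two_pos _
  refine ⟨(2:ℝ) ^ (a+1) * (1 + CT / CH), by positivity, fun s hs => ?_⟩
  obtain ⟨hs0, hs12⟩ := hs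
  have h2s0 : (0:ℝ) < 2*s := by linarith
  have h2s1 : 2*s ≤ 1 := by linarith
  have hΓγ : 0 < Real.Gamma γ := Real.Gamma_pos_of_pos hγ
  -- pointwise bounds
  have hden : ∀ b : ℝ, 0 < b → 0 < Real.Gamma γ * Real.Gamma (a + b + 1) := by
    intro b hb
    exact mul_pos hΓγ (Real.Gamma_pos_of_pos (by linarith))
  have h1 : ∀ b ∈ Ioc (0:ℝ) 1, fK a γ (2*s) b ≤ (2:ℝ)^(a+1) * fK a γ s b := by
    intro b hb
    have hb0 : (0:ℝ) < b := hb.1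
    have hnum : (2*s) ^ (a+b) ≤ (2:ℝ)^(a+1) * s^(a+b) := by
      rw [Real.mul_rpow (by norm_num) hs0.le]
      have : (2:ℝ)^(a+b) ≤ (2:ℝ)^(a+1) :=
        Real.rpow_le_rpow_of_exponent_le one_le_two (by linarith [hb.2])
      exact mul_le_mul_of_nonneg_right this (Real.rpow_nonneg hs0.le _)
    unfold fK
    rw [mul_div_assoc']
    apply div_le_div₀ (by positivity) ?_ (hden b hb0) le_rfl
    · calc (2*s)^(a+b) * b^(γ-1) ≤ ((2:ℝ)^(a+1) * s^(a+b)) * b^(γ-1) :=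
            mul_le_mul_of_nonneg_right hnum (Real.rpow_nonneg hb0.le _)
        _ = (2:ℝ)^(a+1) * (s^(a+b) * b^(γ-1)) := by ring
  have h2 : ∀ b ∈ Ioi (1:ℝ), fK a γ (2*s) b ≤ (2*s)^(a+1) * fK a γ 1 b := by
    intro b hb
    have hb1 : (1:ℝ) < b := hb
    have hnum : (2*s) ^ (a+b) ≤ (2*s)^(a+1) := by
      exact Real.rpow_le_rpow_of_exponent_ge h2s0 h2s1 (by linarith)
    unfold fK
    rw [Real.one_rpow, mul_div_assoc', one_mul]
    apply div_le_div₀ (by positivity) ?_ (hden b (by linarith)) le_rfl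
    calc (2*s)^(a+b) * b^(γ-1) ≤ (2*s)^(a+1) * b^(γ-1) :=
          mul_le_mul_of_nonneg_right hnum (Real.rpow_nonneg (by linarith) _)
      _ = _ := by ring
  have h3 : ∀ b ∈ Ioc (0:ℝ) 1, s^(a+1) * fK a γ 1 b ≤ fK a γ s b := by
    intro b hb
    have hb0 : (0:ℝ) < b := hb.1
    have hnum : s^(a+1) * b^(γ-1) ≤ s^(a+b) * b^(γ-1) := by
      apply mul_le_mul_of_nonneg_right _ (Real.rpow_nonneg hb0.le _)
      exact Real.rpow_le_rpow_of_exponent_ge hs0 (by linarith) (by linarith [hb.2])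
    unfold fK
    rw [Real.one_rpow, mul_div_assoc', one_mul]
    exact div_le_div₀ (by positivity) hnum (hden b hb0) le_rfl
  -- integrated bounds
  have hI2s := fK_integrableOn ha hγ h2s0
  have hIs := fK_integrableOn ha hγ hs0
  have head2 : (∫ b in Ioc (0:ℝ) 1, fK a γ (2*s) b)
      ≤ (2:ℝ)^(a+1) * ∫ b in Ioc (0:ℝ) 1, fK a γ s b := by
    rw [← integral_const_mul]
    exact setIntegral_mono_on (hI2s.mono_set Ioc_subset_Ioi_self)
      ((hIs.mono_set Ioc_subset_Ioi_self).const_mul _) measurableSet_Ioc h1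
  have tail2 : (∫ b in Ioi (1:ℝ), fK a γ (2*s) b) ≤ (2*s)^(a+1) * CT := by
    rw [hCTdef, ← integral_const_mul]
    exact setIntegral_mono_on (hI2s.mono_set (Ioi_subset_Ioi zero_le_one))
      (hIT.const_mul _) measurableSet_Ioi h2
  have head1 : s^(a+1) * CH ≤ ∫ b in Ioc (0:ℝ) 1, fK a γ s b := by
    rw [hCHdef, ← integral_const_mul]
    exact setIntegral_mono_on (hIH.const_mul _)
      (hIs.mono_set Ioc_subset_Ioi_self) measurableSet_Ioc h3
  have headF : (∫ b in Ioc (0:ℝ) 1, fK a γ s b) ≤ FInt a γ s := by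
    rw [FInt_decomp ha hγ hs0]
    have : 0 ≤ ∫ b in Ioi (1:ℝ), fK a γ s b :=
      setIntegral_nonneg measurableSet_Ioi fun b hb =>
        fK_nonneg ha hγ hs0.le (by linarith [mem_Ioi.mp hb])
    linarith
  have hFkey : FInt a γ (2*s) ≤ (2:ℝ)^(a+1) * (1 + CT/CH) * FInt a γ s := by
    rw [FInt_decomp ha hγ h2s0]
    have h2sa : (2*s)^(a+1) = (2:ℝ)^(a+1) * s^(a+1) := Real.mul_rpow (by norm_num) hs0.le
    have hsa : s^(a+1) * CH ≤ FInt a γ s := le_trans head1 headF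
    have hheads : (∫ b in Ioc (0:ℝ) 1, fK a γ s b) ≤ FInt a γ s := headF
    have hsa1 : 0 ≤ s^(a+1) := Real.rpow_nonneg hs0.le _
    have hF : 0 ≤ FInt a γ s := FInt_nonneg ha hγ hs0.le
    rw [h2sa] at tail2
    have e1 : s^(a+1) ≤ FInt a γ s / CH := (le_div_iff₀ hCH).mpr hsa
    calc (∫ b in Ioc (0:ℝ) 1, fK a γ (2*s) b) + ∫ b in Ioi (1:ℝ), fK a γ (2*s) b
        ≤ ((2:ℝ)^(a+1) * ∫ b in Ioc (0:ℝ) 1, fK a γ s b)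
            + (2:ℝ)^(a+1) * s^(a+1) * CT := add_le_add head2 tail2
      _ ≤ (2:ℝ)^(a+1) * FInt a γ s + (2:ℝ)^(a+1) * (FInt a γ s / CH) * CT := by
          refine add_le_add (mul_le_mul_of_nonneg_left hheads h2a1.le) ?_
          exact mul_le_mul_of_nonneg_right (mul_le_mul_of_nonneg_left e1 h2a1.le) hCT
      _ = (2:ℝ)^(a+1) * (1 + CT/CH) * FInt a γ s := by
          field_simp
  -- conclude for kKer
  rw [kKer_eq, kKer_eq]
  have hexp : Real.exp (-(2*s * Real.exp 1)) ≤ Real.exp (-(s * Real.exp 1)) := by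
    apply Real.exp_le_exp.mpr
    nlinarith [Real.exp_pos (1:ℝ), hs0.le]
  calc Real.exp (-(2*s * Real.exp 1)) * FInt a γ (2*s)
      ≤ Real.exp (-(s * Real.exp 1)) * ((2:ℝ)^(a+1) * (1 + CT/CH) * FInt a γ s) := by
        apply mul_le_mul hexp hFkey (FInt_nonneg ha hγ h2s0.le) (Real.exp_pos _).le
    _ = (2:ℝ)^(a+1) * (1 + CT/CH) * (Real.exp (-(s * Real.exp 1)) * FInt a γ s) := by ring

lemma PhiKer_eq {t : ℝ} (ht : 0 ≤ t) : PhiKer a γ t = ∫ s in Ioc (0:ℝ) t, kKer a γ s :=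
  intervalIntegral.integral_of_le ht

lemma kKer_intOn_Ioc (ha : -1 < a) (hγ : 0 < γ) (t : ℝ) :
    IntegrableOn (kKer a γ) (Ioc 0 t) :=
  (kKer_integrableOn ha hγ).mono_set Ioc_subset_Ioi_self

lemma PhiKer_pos (ha : -1 < a) (hγ : 0 < γ) {t : ℝ} (ht : 0 < t) : 0 < PhiKer a γ t := by
  rw [PhiKer_eq ht.le]
  have hnn : 0 ≤ᵐ[volume.restrict (Ioc (0:ℝ) t)] kKer a γ := by
    filter_upwards [ae_restrict_mem measurableSet_Ioc] with s hs
    exact kKer_nonneg ha hγ hs.1.le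
  rw [setIntegral_pos_iff_support_of_nonneg_ae hnn (kKer_intOn_Ioc ha hγ t)]
  have hsub : Ioc (0:ℝ) t ⊆ Function.support (kKer a γ) ∩ Ioc 0 t := fun s hs =>
    ⟨ne_of_gt (kKer_pos ha hγ hs.1), hs⟩
  calc (0:ENNReal) < volume (Ioc (0:ℝ) t) := by simp [ht]
    _ ≤ _ := measure_mono hsub

lemma PhiKer_le_B (ha : -1 < a) (hγ : 0 < γ) {t : ℝ} (ht : 0 ≤ t) :
    PhiKer a γ t ≤ ∫ s in Ioi (0:ℝ), kKer a γ s := by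
  rw [PhiKer_eq ht]
  have hnn : 0 ≤ᵐ[volume.restrict (Ioi (0:ℝ))] kKer a γ := by
    filter_upwards [ae_restrict_mem measurableSet_Ioi] with s hs
    exact kKer_nonneg ha hγ (le_of_lt hs)
  exact setIntegral_mono_set (kKer_integrableOn ha hγ) hnn
    (HasSubset.Subset.eventuallyLE Ioc_subset_Ioi_self)

lemma PhiKer_mono (ha : -1 < a) (hγ : 0 < γ) {t₁ t₂ : ℝ} (h1 : 0 ≤ t₁) (h12 : t₁ ≤ t₂) :
    PhiKer a γ t₁ ≤ PhiKer a γ t₂ := by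
  rw [PhiKer_eq h1, PhiKer_eq (le_trans h1 h12)]
  have hnn : 0 ≤ᵐ[volume.restrict (Ioc (0:ℝ) t₂)] kKer a γ := by
    filter_upwards [ae_restrict_mem measurableSet_Ioc] with s hs
    exact kKer_nonneg ha hγ hs.1.le
  exact setIntegral_mono_set (kKer_intOn_Ioc ha hγ t₂) hnn
    (HasSubset.Subset.eventuallyLE (Ioc_subset_Ioc le_rfl h12))

theorem stmt_18 (a γ : ℝ) (ha : -1 < a) (hγ : 0 < γ) :
    ∃ C : ℝ, ∀ t : ℝ, 0 < t → PhiKer a γ (2 * t) / PhiKer a γ t ≤ C := by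
  obtain ⟨C1, hC1, hdb⟩ := doubling_pointwise ha hγ
  set B : ℝ := ∫ s in Ioi (0:ℝ), kKer a γ s with hBdef
  have hB0 : 0 ≤ B :=
    setIntegral_nonneg measurableSet_Ioi fun s hs => kKer_nonneg ha hγ (le_of_lt hs)
  have hΦhalf : 0 < PhiKer a γ (1/2) := PhiKer_pos ha hγ (by norm_num)
  refine ⟨max (2*C1) (B / PhiKer a γ (1/2)), fun t ht => ?_⟩
  rcases le_or_gt t (1/2) with htc | htc
  · -- small t
    have key : PhiKer a γ (2*t) ≤ 2 * C1 * PhiKer a γ t := by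
      have hcomp := intervalIntegral.integral_comp_mul_left (kKer a γ)
        (two_ne_zero (α := ℝ)) (a := 0) (b := t)
      rw [mul_zero] at hcomp
      have hPhi2t : PhiKer a γ (2*t) = 2 * ∫ x in (0:ℝ)..t, kKer a γ (2*x) := by
        rw [PhiKer, hcomp, smul_eq_mul]
        ring
      rw [hPhi2t]
      have hII : IntervalIntegrable (fun x => kKer a γ (2*x)) volume 0 t := by
        have h1 : IntervalIntegrable (kKer a γ) volume 0 (2*t) :=
          (intervalIntegrable_iff_integrableOn_Ioc_of_le (by linarith)).mpr
            (kKer_intOn_Ioc ha hγ _)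
        have := h1.comp_mul_left (c := 2)
        simpa using this
      have hstep : (∫ x in (0:ℝ)..t, kKer a γ (2*x)) ≤ ∫ x in (0:ℝ)..t, C1 * kKer a γ x := by
        rw [intervalIntegral.integral_of_le ht.le, intervalIntegral.integral_of_le ht.le]
        apply setIntegral_mono_on
          ((intervalIntegrable_iff_integrableOn_Ioc_of_le ht.le).mp hII)
          ((kKer_intOn_Ioc ha hγ t).const_mul _) measurableSet_Ioc
        intro x hx
        exact hdb x ⟨hx.1, le_trans hx.2 htc⟩
      rw [intervalIntegral.integral_const_mul] at hstep
      have : (0:ℝ) < 2 := two_pos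
      calc 2 * ∫ x in (0:ℝ)..t, kKer a γ (2*x) ≤ 2 * (C1 * PhiKer a γ t) := by
            apply mul_le_mul_of_nonneg_left _ (by norm_num)
            exact hstep
        _ = 2 * C1 * PhiKer a γ t := by ring
    have hΦt : 0 < PhiKer a γ t := PhiKer_pos ha hγ ht
    refine le_trans ?_ (le_max_left _ _)
    rw [div_le_iff₀ hΦt]
    exact key
  · -- large t
    refine le_trans ?_ (le_max_right _ _)
    have h1 : PhiKer a γ (2*t) ≤ B := PhiKer_le_B ha hγ (by linarith)
    have h2 : PhiKer a γ (1/2) ≤ PhiKer a γ t := PhiKer_mono ha hγ (by norm_num) htc.le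
    exact div_le_div₀ hB0 h1 hΦhalf h2
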